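/- Let 𝒜 be a unital Banach algebra, q ∈ ℕ, and let I ⊆ 𝒜 be a two-sided ideal such that every product of q + 1 elements of I vanishes. Let ω : ℝ → I be continuous. For s ≥ 0 define A(s) = 1 + Σ_{k=1}^{q} (−1)^k ∫_{sΔ_k} ω(t_k)ω(t_{k−1})⋯ω(t_1) dt_1⋯dt_k, where sΔ_k = {(t_1,…,t_k) : 0 ≤ t_1 ≤ t_2 ≤ ⋯ ≤ t_k ≤ s}. Then: (i) A(0) = 1; (ii) A is differentiable on [0,∞) with A′(s) = −ω(s)·A(s) for every s ≥ 0; (iii) for every s ≥ 0 the element A(s) is invertible in 𝒜. -/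

import Mathlib

/-!
Peeling off the latest time by Fubini turns `∫_{sΔ_{k+1}} ω(t_{k+1})⋯ω(t₁)` into
`∫₀ˢ ω(u) ∫_{uΔ_k} ω(t_k)⋯ω(t₁) du`, so for `s ≥ 0` the `k`-th term of `A` is the iterated
integral `W_k(s)`, with `W₀ = 1` and `W_{k+1}' = ω W_k`. Differentiating the alternating sum term
by term gives `A' = -ω A` up to the boundary term `ω(s) W_q(s)`, which vanishes because
`ω(s) ω(t_q)⋯ω(t₁)` is a product of `q + 1` elements of `I`. Every term with `k ≥ 1` is an integral
of `I`-valued functions, hence lies in the closure of `I`, where all `(q + 1)`-st powers vanish by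
continuity; so `A(s)` is `1` plus a nilpotent element, hence a unit.
-/

open MeasureTheory

/-- The rescaled simplex `sΔₖ = {(t₁, …, t_k) : 0 ≤ t₁ ≤ t₂ ≤ ⋯ ≤ t_k ≤ s}`. -/
def simplex (k : ℕ) (s : ℝ) : Set (Fin k → ℝ) :=
  {t | (∀ i j : Fin k, i ≤ j → t i ≤ t j) ∧ (∀ i, 0 ≤ t i) ∧ ∀ i, t i ≤ s}

/-- The truncated Volterra series
`A(s) = 1 + ∑_{k=1}^{q} (-1)^k ∫_{sΔₖ} ω(t_k)ω(t_{k-1})⋯ω(t₁) dt₁⋯dt_k`. -/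
noncomputable def volterra {𝒜 : Type*} [NormedRing 𝒜] [NormedAlgebra ℝ 𝒜] [CompleteSpace 𝒜]
    (q : ℕ) (ω : ℝ → 𝒜) (s : ℝ) : 𝒜 :=
  1 + ∑ k ∈ Finset.Icc 1 q, (-1 : ℝ) ^ k •
      ∫ t in simplex k s, (List.ofFn fun i : Fin k => ω (t i)).reverse.prod

lemma isClosed_simplex (k : ℕ) (s : ℝ) : IsClosed (simplex k s) := by
  simp only [simplex, Set.ofPred_and, Set.ofPred_forall]
  exact (isClosed_iInter fun i => isClosed_iInter fun j => isClosed_iInter fun _ =>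
      isClosed_le (continuous_apply i) (continuous_apply j)).inter
    ((isClosed_iInter fun i => isClosed_le continuous_const (continuous_apply i)).inter
      (isClosed_iInter fun i => isClosed_le (continuous_apply i) continuous_const))

lemma isCompact_simplex (k : ℕ) (s : ℝ) : IsCompact (simplex k s) :=
  (isCompact_Icc (a := 0) (b := fun _ => s)).of_isClosed_subset (isClosed_simplex k s)
    fun _ ⟨_, h0, hs⟩ => ⟨h0, hs⟩

lemma simplex_zero (s : ℝ) : simplex 0 s = Set.univ :=
  Set.eq_univ_of_forall fun _ => ⟨finZeroElim, finZeroElim, finZeroElim⟩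

lemma snoc_mem_simplex_iff {k : ℕ} {s u : ℝ} {y : Fin k → ℝ} :
    Fin.snoc y u ∈ simplex (k + 1) s ↔ u ∈ Set.Icc 0 s ∧ y ∈ simplex k u := by
  simp only [simplex, Set.mem_ofPred_eq, Set.mem_Icc, Fin.forall_fin_succ', Fin.snoc_castSucc,
    Fin.snoc_last, Fin.castSucc_le_castSucc_iff, Fin.le_last, Fin.last_le_iff, Fin.castSucc_ne_last,
    forall_const, IsEmpty.forall_iff, implies_true, le_refl, and_self, and_true]
  constructor
  · rintro ⟨hmono, ⟨h0, hu0⟩, -, hus⟩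
    exact ⟨⟨hu0, hus⟩, fun i => (hmono i).1, h0, fun i => (hmono i).2⟩
  · rintro ⟨⟨hu0, hus⟩, hmono, h0, hu⟩
    exact ⟨fun i => ⟨hmono i, hu i⟩, ⟨h0, hu0⟩, fun i => (hu i).trans hus, hus⟩

section Fubini

variable {E : Type*} [NormedAddCommGroup E] [NormedSpace ℝ E] {k : ℕ}

theorem integral_eq_integral_integral_snoc {f : (Fin (k + 1) → ℝ) → E} (hf : Integrable f) :
    ∫ x, f x = ∫ u, ∫ y, f (Fin.snoc y u) := by
  have he := (volume_preserving_piFinSuccAbove (fun _ : Fin (k + 1) => ℝ) (Fin.last k)).symm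
  have hsnoc : ⇑(MeasurableEquiv.piFinSuccAbove (fun _ => ℝ) (Fin.last k)).symm =
      fun p => Fin.snoc p.2 p.1 :=
    funext fun p => Fin.insertNth_last' p.1 p.2
  have hint := (he.integrable_comp_emb (MeasurableEquiv.measurableEmbedding _)).2 hf
  rw [hsnoc] at hint
  rw [← he.integral_comp', hsnoc]
  exact integral_prod _ hint

theorem setIntegral_eq_integral_setIntegral_snoc {S : Set (Fin (k + 1) → ℝ)} (hS : MeasurableSet S)
    {f : (Fin (k + 1) → ℝ) → E} (hf : IntegrableOn f S) :
    ∫ x in S, f x = ∫ u, ∫ y in {y | Fin.snoc y u ∈ S}, f (Fin.snoc y u) := by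
  rw [← integral_indicator hS, integral_eq_integral_integral_snoc (hf.integrable_indicator hS)]
  refine integral_congr_ae (Filter.Eventually.of_forall fun u => ?_)
  change _ = ∫ y in (fun y => Fin.snoc y u) ⁻¹' S, f (Fin.snoc y u)
  rw [← integral_indicator (hS.preimage (by fun_prop))]
  rfl

end Fubini

theorem Submodule.integral_mem {α E : Type*} [MeasurableSpace α] [NormedAddCommGroup E]
    [NormedSpace ℝ E] [CompleteSpace E] {μ : Measure α} [IsFiniteMeasure μ] {J : Submodule ℝ E}
    (hJ : IsClosed (J : Set E)) {f : α → E} (hfJ : ∀ᵐ x ∂μ, f x ∈ J) : ∫ x, f x ∂μ ∈ J := by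
  by_cases hf : Integrable f μ
  swap
  · rw [integral_undef hf]
    exact J.zero_mem
  rw [← measure_smul_average]
  refine J.smul_mem _ ?_
  rcases eq_or_ne μ 0 with rfl | hμ
  · simp
  have := NeZero.mk hμ
  exact J.convex.average_mem hJ hfJ hf

section OrderedProd

variable {M : Type*} [Monoid M]

def orderedProd (ω : ℝ → M) {k : ℕ} (t : Fin k → ℝ) : M :=
  (List.ofFn fun i => ω (t i)).reverse.prod

variable {ω : ℝ → M}

@[simp]
lemma orderedProd_fin_zero (t : Fin 0 → ℝ) : orderedProd ω t = 1 := by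
  simp [orderedProd]

lemma orderedProd_succ {k : ℕ} (t : Fin (k + 1) → ℝ) :
    orderedProd ω t = ω (t (Fin.last k)) * orderedProd ω (Fin.init t) := by
  rw [orderedProd, List.ofFn_succ']
  simp [orderedProd, Fin.init]

@[simp]
lemma orderedProd_snoc {k : ℕ} (y : Fin k → ℝ) (u : ℝ) :
    orderedProd ω (Fin.snoc y u) = ω u * orderedProd ω y := by
  simp [orderedProd_succ]

lemma continuous_orderedProd [TopologicalSpace M] [ContinuousMul M] (hω : Continuous ω) (k : ℕ) :
    Continuous fun t : Fin k → ℝ => orderedProd ω t := by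
  induction k with
  | zero => simp only [orderedProd_fin_zero]; exact continuous_const
  | succ k ih =>
    simp only [orderedProd_succ]
    exact (hω.comp (continuous_apply _)).mul (ih.comp (by fun_prop))

end OrderedProd

section BanachAlgebra

variable {𝒜 : Type*} [NormedRing 𝒜] {ω : ℝ → 𝒜}

lemma integrableOn_orderedProd_simplex (hω : Continuous ω) (k : ℕ) (s : ℝ) :
    IntegrableOn (fun t : Fin k → ℝ => orderedProd ω t) (simplex k s) :=
  (continuous_orderedProd hω k).continuousOn.integrableOn_compact (isCompact_simplex k s)

variable [NormedAlgebra ℝ 𝒜]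

-- Agrees with the simplex integral only for `s ≥ 0`: for `s < 0` the simplex is empty, while
-- the oriented integrals `∫ u in 0..s` are not zero.
noncomputable def iteratedIntegral (ω : ℝ → 𝒜) : ℕ → ℝ → 𝒜
  | 0 => fun _ => 1
  | k + 1 => fun s => ∫ u in 0..s, ω u * iteratedIntegral ω k u

lemma continuous_iteratedIntegral (hω : Continuous ω) : ∀ k, Continuous (iteratedIntegral ω k)
  | 0 => continuous_const
  | k + 1 => intervalIntegral.continuous_primitive
      (fun _ _ => (hω.mul (continuous_iteratedIntegral hω k)).intervalIntegrable _ _) 0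

noncomputable def dysonPartialSum (ω : ℝ → 𝒜) (q : ℕ) (s : ℝ) : 𝒜 :=
  ∑ k ∈ Finset.range (q + 1), (-1 : ℝ) ^ k • iteratedIntegral ω k s

lemma dysonPartialSum_zero (q : ℕ) : dysonPartialSum ω q 0 = 1 := by
  simp [dysonPartialSum, Finset.sum_range_succ', iteratedIntegral]

variable [CompleteSpace 𝒜]

lemma setIntegral_simplex_succ (hω : Continuous ω) (k : ℕ) (s : ℝ) :
    ∫ t in simplex (k + 1) s, orderedProd ω t
      = ∫ u in Set.Icc 0 s, ω u * ∫ y in simplex k u, orderedProd ω y := by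
  rw [setIntegral_eq_integral_setIntegral_snoc (isClosed_simplex _ _).measurableSet
    (integrableOn_orderedProd_simplex hω _ _), ← integral_indicator measurableSet_Icc]
  congr 1 with u
  simp only [snoc_mem_simplex_iff, orderedProd_snoc]
  by_cases hu : u ∈ Set.Icc 0 s
  · simp only [hu, true_and, Set.ofPred_mem_eq, Set.indicator_of_mem]
    exact (ContinuousLinearMap.mul ℝ 𝒜 (ω u)).integral_comp_comm
      (integrableOn_orderedProd_simplex hω k u)
  · simp [hu]

lemma hasDerivAt_iteratedIntegral_succ (hω : Continuous ω) (k : ℕ) (s : ℝ) :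
    HasDerivAt (iteratedIntegral ω (k + 1)) (ω s * iteratedIntegral ω k s) s :=
  (hω.mul (continuous_iteratedIntegral hω k)).integral_hasStrictDerivAt 0 s |>.hasDerivAt

lemma setIntegral_simplex_eq_iteratedIntegral (hω : Continuous ω) (k : ℕ) {s : ℝ} (hs : 0 ≤ s) :
    ∫ t in simplex k s, orderedProd ω t = iteratedIntegral ω k s := by
  induction k generalizing s with
  | zero => simp [simplex_zero, iteratedIntegral, measureReal_def, volume_pi]
  | succ k ih =>
    rw [setIntegral_simplex_succ hω, integral_Icc_eq_integral_Ioc,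
      ← intervalIntegral.integral_of_le hs]
    exact intervalIntegral.integral_congr fun u hu => by
      rw [Set.uIcc_of_le hs] at hu
      simp only [ih hu.1]

lemma hasDerivAt_dysonPartialSum (hω : Continuous ω) (q : ℕ) {s : ℝ}
    (hq : ω s * iteratedIntegral ω q s = 0) :
    HasDerivAt (dysonPartialSum ω q) (-(ω s * dysonPartialSum ω q s)) s := by
  have hderiv : HasDerivAt (dysonPartialSum ω q)
      (∑ k ∈ Finset.range q, (-1 : ℝ) ^ (k + 1) • (ω s * iteratedIntegral ω k s) + 0) s := by
    unfold dysonPartialSum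
    simp_rw [Finset.sum_range_succ' _ q]
    refine (HasDerivAt.fun_sum fun k _ => ?_).add (hasDerivAt_const s ((-1 : ℝ) ^ 0 • (1 : 𝒜)))
    exact (hasDerivAt_iteratedIntegral_succ hω k s).const_smul ((-1 : ℝ) ^ (k + 1))
  convert hderiv using 1
  rw [dysonPartialSum, Finset.sum_range_succ, mul_add, Finset.mul_sum, mul_smul_comm, hq]
  simp [pow_succ, ← Finset.sum_neg_distrib]

lemma volterra_eq_dysonPartialSum (hω : Continuous ω) (q : ℕ) {s : ℝ} (hs : 0 ≤ s) :
    volterra q ω s = dysonPartialSum ω q s := by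
  rw [dysonPartialSum, Finset.sum_range_eq_add_Ico _ q.add_one_pos, Finset.Ico_add_one_right_eq_Icc]
  simp only [volterra, pow_zero, one_smul, iteratedIntegral]
  congr 1
  refine Finset.sum_congr rfl fun k _ => ?_
  rw [← setIntegral_simplex_eq_iteratedIntegral hω k hs]
  rfl

end BanachAlgebra

section NilpotentIdeal

variable {R : Type*} [Ring R] {q : ℕ} {I : TwoSidedIdeal R}

lemma list_prod_eq_zero_of_mem_ideal
    (hI : ∀ f : Fin (q + 1) → R, (∀ i, f i ∈ I) → (List.ofFn f).prod = 0)
    {l : List R} (hl : l.length = q + 1) (hlI : ∀ a ∈ l, a ∈ I) : l.prod = 0 := by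
  rw [← List.ofFn_get l, List.ofFn_congr hl]
  exact hI _ fun i => hlI _ (l.get_mem _)

lemma pow_eq_zero_of_mem_closure_ideal [TopologicalSpace R] [ContinuousMul R] [T2Space R]
    (hI : ∀ f : Fin (q + 1) → R, (∀ i, f i ∈ I) → (List.ofFn f).prod = 0)
    {x : R} (hx : x ∈ closure (I : Set R)) : x ^ (q + 1) = 0 := by
  refine closure_minimal (fun y hy => ?_) (isClosed_eq (continuous_pow _) continuous_const) hx
  simpa [List.ofFn_const, pow_succ'] using hI (fun _ => y) fun _ => hy

variable {ω : ℝ → R}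

lemma orderedProd_mem {k : ℕ} (hωI : ∀ t, ω t ∈ I) (t : Fin (k + 1) → ℝ) :
    orderedProd ω t ∈ I := by
  rw [orderedProd_succ]
  exact I.mul_mem_right _ _ (hωI _)

lemma mul_orderedProd_eq_zero
    (hI : ∀ f : Fin (q + 1) → R, (∀ i, f i ∈ I) → (List.ofFn f).prod = 0)
    (hωI : ∀ t, ω t ∈ I) {a : R} (ha : a ∈ I) (t : Fin q → ℝ) : a * orderedProd ω t = 0 := by
  simpa [orderedProd] using list_prod_eq_zero_of_mem_ideal hI
    (l := a :: (List.ofFn fun i => ω (t i)).reverse) (by simp) (by simp [ha, hωI])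

end NilpotentIdeal

section BanachAlgebraIdeal

variable {𝒜 : Type*} [NormedRing 𝒜] [NormedAlgebra ℝ 𝒜] [CompleteSpace 𝒜] {q : ℕ}
  {I : TwoSidedIdeal 𝒜} {ω : ℝ → 𝒜}

lemma mul_setIntegral_simplex_eq_zero
    (hI : ∀ f : Fin (q + 1) → 𝒜, (∀ i, f i ∈ I) → (List.ofFn f).prod = 0)
    (hω : Continuous ω) (hωI : ∀ t, ω t ∈ I) {a : 𝒜} (ha : a ∈ I) (s : ℝ) :
    a * ∫ t in simplex q s, orderedProd ω t = 0 := by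
  calc a * ∫ t in simplex q s, orderedProd ω t
      = ∫ t in simplex q s, a * orderedProd ω t :=
        ((ContinuousLinearMap.mul ℝ 𝒜 a).integral_comp_comm
          (integrableOn_orderedProd_simplex hω q s)).symm
    _ = 0 := by simp [mul_orderedProd_eq_zero hI hωI ha]

lemma setIntegral_simplex_mem_closure (hωI : ∀ t, ω t ∈ I) (k : ℕ) (s : ℝ) :
    ∫ t in simplex (k + 1) s, orderedProd ω t
      ∈ (I.asIdeal.restrictScalars ℝ).topologicalClosure := by
  have : IsFiniteMeasure (volume.restrict (simplex (k + 1) s)) :=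
    isFiniteMeasure_restrict.2 (isCompact_simplex _ _).measure_lt_top.ne
  exact Submodule.integral_mem (Submodule.isClosed_topologicalClosure _) (ae_of_all _ fun t =>
    Submodule.le_topologicalClosure _ (TwoSidedIdeal.mem_asIdeal.2 (orderedProd_mem hωI t)))

lemma isUnit_volterra (hI : ∀ f : Fin (q + 1) → 𝒜, (∀ i, f i ∈ I) → (List.ofFn f).prod = 0)
    (hωI : ∀ t, ω t ∈ I) (s : ℝ) : IsUnit (volterra q ω s) := by
  set J := (I.asIdeal.restrictScalars ℝ).topologicalClosure
  have hN : ∑ k ∈ Finset.Icc 1 q, (-1 : ℝ) ^ k • ∫ t in simplex k s, orderedProd ω t ∈ J := by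
    refine J.sum_mem fun k hk => J.smul_mem _ ?_
    obtain ⟨j, rfl⟩ := Nat.exists_eq_add_one.2 (Finset.mem_Icc.1 hk).1
    exact setIntegral_simplex_mem_closure hωI j s
  exact IsNilpotent.isUnit_one_add ⟨q + 1, pow_eq_zero_of_mem_closure_ideal hI hN⟩

end BanachAlgebraIdeal

/-- If `𝒜` is a unital Banach algebra, `I ⊆ 𝒜` a two-sided ideal in which every product of
`q+1` elements vanishes, and `ω : ℝ → I ⊆ 𝒜` is continuous, then the truncated Volterra
series `A` satisfies: (i) `A(0) = 1`; (ii) `A'(s) = -ω(s)·A(s)` for `s ∈ [0, ∞)`;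
(iii) `A(s)` is invertible for every `s ≥ 0`. -/
theorem volterra_parallel_transport {𝒜 : Type*} [NormedRing 𝒜] [NormedAlgebra ℝ 𝒜]
    [CompleteSpace 𝒜] (q : ℕ) (I : TwoSidedIdeal 𝒜)
    (hI : ∀ f : Fin (q + 1) → 𝒜, (∀ i, f i ∈ I) → (List.ofFn f).prod = 0)
    (ω : ℝ → 𝒜) (hω : Continuous ω) (hωI : ∀ t, ω t ∈ I) :
    volterra q ω 0 = 1 ∧
      (∀ s : ℝ, 0 ≤ s →
        HasDerivWithinAt (volterra q ω) (-(ω s * volterra q ω s)) (Set.Ici 0) s) ∧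
      ∀ s : ℝ, 0 ≤ s → IsUnit (volterra q ω s) := by
  have hA : ∀ s ∈ Set.Ici 0, volterra q ω s = dysonPartialSum ω q s :=
    fun s hs => volterra_eq_dysonPartialSum hω q hs
  refine ⟨?_, fun s hs => ?_, fun s _ => isUnit_volterra hI hωI s⟩
  · rw [hA 0 Set.self_mem_Ici, dysonPartialSum_zero]
  · have hq : ω s * iteratedIntegral ω q s = 0 := by
      rw [← setIntegral_simplex_eq_iteratedIntegral hω q hs]
      exact mul_setIntegral_simplex_eq_zero hI hω hωI (hωI s) s
    rw [hA s hs]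
    exact (hasDerivAt_dysonPartialSum hω q hq).hasDerivWithinAt.congr hA (hA s hs)
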